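/- Let (A, M, H1) be a sparse approximation triple with constants s_A and a_A, let H2 be a Hilbert space, and let T ∈ B(H1,H2) have the restricted isometry property on 2A and on 4A with δ_{2A}(T) < (√2 + √(a_A s_A))⁻². Then there exist constants C₁, C₂ > 0, independent of x⁰ ∈ M and ε ≥ 0, such that for every x⁰ ∈ M and ε > 0 the solution x⁰_M := argmin{‖x̂‖_M : x̂ ∈ M, ‖Tx̂ − Tx⁰‖ ≤ ε} satisfies ‖x⁰_M − x⁰‖_{H1} ≤ C₁√a_A·σ_{A,M}(x⁰) + C₂ε and ‖x⁰_M − x⁰‖_M ≤ C₁σ_{A,M}(x⁰) + C₂√(s_A)·ε. -/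
import Mathlib


/-- A set-valued "best approximator": `y` is a best approximation of `x` in `K` (w.r.t. the norm
of `M`). -/
def IsBestApprox {M : Type*} [NormedAddCommGroup M] (K : Set M) (x y : M) : Prop :=
  y ∈ K ∧ ∀ z ∈ K, ‖x - y‖ ≤ ‖x - z‖

/-- A sparse approximation triple `(A, M, H1)`: the Banach space `M` is continuously embedded
into the Hilbert space `H1` via `j` with embedding norm at most one, `A = ⋃ i, A_i` is a union of
closed linear subspaces, every nonempty closed subset of `M` is proximinal, best approximators
onto each `A_i` w.r.t. the `M`-norm are also best approximators w.r.t. the `H1`-norm, the norms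
split along such best approximators, and `⋃_{k ≥ 1} kA` is dense in `H1`. -/
structure SparseApproxTriple (H1 : Type*) [NormedAddCommGroup H1] [InnerProductSpace ℝ H1]
    (M : Type*) [NormedAddCommGroup M] [NormedSpace ℝ M] (I : Type*) where
  /-- the (injective, norm at most one) embedding of `M` into `H1` -/
  j : M →ₗ[ℝ] H1
  j_inj : Function.Injective j
  j_norm_le : ∀ x : M, ‖j x‖ ≤ ‖x‖
  /-- the subspaces whose union is `A` -/
  Asub : I → Submodule ℝ M
  index_nonempty : Nonempty I
  Asub_closed : ∀ i : I, IsClosed (Asub i : Set M)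
  A_closed : IsClosed (⋃ i : I, (Asub i : Set M))
  /-- proximinality: every nonempty closed subset of `M` is proximinal -/
  prox : ∀ K : Set M, K.Nonempty → IsClosed K → ∀ x : M, ∃ y ∈ K, ∀ z ∈ K, ‖x - y‖ ≤ ‖x - z‖
  /-- common best approximator property -/
  common_best : ∀ (i : I) (x y : M), y ∈ Asub i → (∀ z ∈ Asub i, ‖x - y‖ ≤ ‖x - z‖) →
    ∀ z ∈ Asub i, ‖j x - j y‖ ≤ ‖j x - j z‖
  /-- norm splitting in `M` -/
  norm_split_M : ∀ (i : I) (x y : M), y ∈ Asub i → (∀ z ∈ Asub i, ‖x - y‖ ≤ ‖x - z‖) →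
    ‖x‖ = ‖y‖ + ‖x - y‖
  /-- norm splitting in `H1` -/
  norm_split_H : ∀ (i : I) (x y : M), y ∈ Asub i → (∀ z ∈ Asub i, ‖x - y‖ ≤ ‖x - z‖) →
    ‖j x‖ ^ 2 = ‖j y‖ ^ 2 + ‖j x - j y‖ ^ 2
  /-- the embedding of `A` into `M` is bounded (so that the sparsity `s_A` is finite) -/
  sA_bddAbove : BddAbove
    {r : ℝ | ∃ x : M, x ∈ (⋃ i : I, (Asub i : Set M)) ∧ x ≠ 0 ∧ r = ‖x‖ / ‖j x‖}
  /-- sparse density: `⋃_{k ≥ 1} kA` is dense in `H1` -/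
  sparse_dense : Dense (⋃ k : ℕ, {u : H1 | ∃ f : Fin (k + 1) → M,
    (∀ n, f n ∈ ⋃ i : I, (Asub i : Set M)) ∧ u = ∑ n, j (f n)})

namespace SparseApproxTriple

variable {H1 : Type*} [NormedAddCommGroup H1] [InnerProductSpace ℝ H1]
  {M : Type*} [NormedAddCommGroup M] [NormedSpace ℝ M] {I : Type*}

/-- The union `A = ⋃ i, A_i`, as a subset of `M`. -/
def A (S : SparseApproxTriple H1 M I) : Set M := ⋃ i : I, (S.Asub i : Set M)

/-- `σ_{A,M}(x) := inf_{z ∈ A} ‖x − z‖_M`, the best sparse approximation error. -/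
noncomputable def sigma (S : SparseApproxTriple H1 M I) (x : M) : ℝ :=
  sInf ((fun z => ‖x - z‖) '' S.A)

/-- The sparsity `s_A := (sup_{0 ≠ x ∈ A} ‖x‖_M/‖x‖_{H1})²`. -/
noncomputable def sA (S : SparseApproxTriple H1 M I) : ℝ :=
  (sSup {r : ℝ | ∃ x : M, x ∈ S.A ∧ x ≠ 0 ∧ r = ‖x‖ / ‖S.j x‖}) ^ 2

/-- The sparse approximation ratio
`a_A := sup_{0 ≠ x ∈ M} (‖u_{A,M}‖_{H1}/‖x_{A,M}‖_M)²`, where `x_{A,M}` is a best approximator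
of `x` in `A` and `u_{A,M}` a best approximator of `x − x_{A,M}` in `A` (both w.r.t. the norm of
`M`). -/
noncomputable def aA (S : SparseApproxTriple H1 M I) : ℝ :=
  sSup {r : ℝ | ∃ x xa u : M, x ≠ 0 ∧ IsBestApprox S.A x xa ∧
    IsBestApprox S.A (x - xa) u ∧ r = (‖S.j u‖ / ‖xa‖) ^ 2}

/-- `kA := {x₁ + ⋯ + x_k : x₁, …, x_k ∈ A}`. -/
def sumSet (S : SparseApproxTriple H1 M I) (k : ℕ) : Set M :=
  {x : M | ∃ f : Fin k → M, (∀ n, f n ∈ S.A) ∧ x = ∑ n, f n}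

end SparseApproxTriple

section Helpers

open scoped RealInnerProductSpace
open Filter Finset

namespace SparseApproxTriple

variable {H1 : Type*} [NormedAddCommGroup H1] [InnerProductSpace ℝ H1]
  {M : Type*} [NormedAddCommGroup M] [NormedSpace ℝ M] {I : Type*}

lemma mem_A (S : SparseApproxTriple H1 M I) {i : I} {x : M} (hx : x ∈ S.Asub i) : x ∈ S.A :=
  Set.mem_iUnion.2 ⟨i, hx⟩

lemma zero_mem_A (S : SparseApproxTriple H1 M I) : (0 : M) ∈ S.A := by
  obtain ⟨i⟩ := S.index_nonempty
  exact S.mem_A (S.Asub i).zero_mem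

lemma A_nonempty (S : SparseApproxTriple H1 M I) : S.A.Nonempty := ⟨0, S.zero_mem_A⟩

lemma neg_mem_A (S : SparseApproxTriple H1 M I) {x : M} (hx : x ∈ S.A) : -x ∈ S.A := by
  obtain ⟨i, hi⟩ := Set.mem_iUnion.1 hx
  exact S.mem_A (neg_mem hi)

lemma smul_mem_A (S : SparseApproxTriple H1 M I) (t : ℝ) {x : M} (hx : x ∈ S.A) : t • x ∈ S.A := by
  obtain ⟨i, hi⟩ := Set.mem_iUnion.1 hx
  exact S.mem_A ((S.Asub i).smul_mem t hi)

/-- if `v` is closer to `0` than to every multiple of `w`, then `v ⟂ w`. -/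
lemma ortho_of_min {v w : H1} (hmin : ∀ t : ℝ, ‖v‖ ≤ ‖v - t • w‖) : ⟪v, w⟫ = 0 := by
  by_cases hw : w = 0
  · simp [hw]
  have hw2 : (0:ℝ) < ‖w‖ ^ 2 := pow_pos (norm_pos_iff.2 hw) 2
  have key : ∀ t : ℝ, 0 ≤ t ^ 2 * ‖w‖ ^ 2 - 2 * t * ⟪v, w⟫ := by
    intro t
    have h1 : ‖v - t • w‖ ^ 2 = ‖v‖ ^ 2 - 2 * ⟪v, t • w⟫ + ‖t • w‖ ^ 2 := norm_sub_sq_real v (t • w)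
    have h2 : ⟪v, t • w⟫ = t * ⟪v, w⟫ := real_inner_smul_right v w t
    have h3 : ‖t • w‖ ^ 2 = t ^ 2 * ‖w‖ ^ 2 := by
      rw [norm_smul, mul_pow, Real.norm_eq_abs, sq_abs]
    have h4 := hmin t
    nlinarith [norm_nonneg v, norm_nonneg (v - t • w)]
  set t0 : ℝ := ⟪v, w⟫ / ‖w‖ ^ 2 with ht0def
  have ht0 : t0 * ‖w‖ ^ 2 = ⟪v, w⟫ := div_mul_cancel₀ _ (ne_of_gt hw2)
  have e1 : t0 ^ 2 * ‖w‖ ^ 2 = t0 * ⟪v, w⟫ := by rw [pow_two, mul_assoc, ht0]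
  have h3 : 0 ≤ -(t0 * ⟪v, w⟫) := by have := key t0; linarith [key t0, e1.symm ▸ key t0]
  have h4 : ⟪v, w⟫ ^ 2 = (t0 * ⟪v, w⟫) * ‖w‖ ^ 2 := by
    rw [pow_two]; nth_rewrite 1 [← ht0]; ring
  have h5 : ⟪v, w⟫ ^ 2 ≤ 0 := by nlinarith [mul_nonneg h3 hw2.le]
  have h6 : ⟪v, w⟫ ^ 2 = 0 := le_antisymm h5 (sq_nonneg _)
  exact sq_eq_zero_iff.mp h6

/-- the `H1`-residual of a best approximation onto `Asub i` is orthogonal to `j '' Asub i`. -/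
lemma inner_res (S : SparseApproxTriple H1 M I) {i : I} {x y : M} (hy : y ∈ S.Asub i)
    (hmin : ∀ z ∈ S.Asub i, ‖x - y‖ ≤ ‖x - z‖) {w : M} (hw : w ∈ S.Asub i) :
    ⟪S.j x - S.j y, S.j w⟫ = 0 := by
  have h0 : ∀ z ∈ S.Asub i, ‖(x - y) - 0‖ ≤ ‖(x - y) - z‖ := by
    intro z hz
    rw [sub_zero]
    calc ‖x - y‖ ≤ ‖x - (y + z)‖ := hmin _ (add_mem hy hz)
      _ = ‖(x - y) - z‖ := by rw [show x - (y + z) = (x - y) - z by abel]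
  have hcb := S.common_best i (x - y) 0 (S.Asub i).zero_mem h0
  have hv : S.j (x - y) = S.j x - S.j y := map_sub _ _ _
  apply ortho_of_min
  intro t
  have h1 := hcb (t • w) ((S.Asub i).smul_mem t hw)
  rw [map_zero, sub_zero, map_smul, hv] at h1
  exact h1

lemma sA_nonneg (S : SparseApproxTriple H1 M I) : 0 ≤ S.sA := sq_nonneg _

lemma norm_le_sqrt_sA (S : SparseApproxTriple H1 M I) {z : M} (hz : z ∈ S.A) :
    ‖z‖ ≤ Real.sqrt S.sA * ‖S.j z‖ := by
  rcases eq_or_ne z 0 with rfl | hz0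
  · simp
  · have hjz : S.j z ≠ 0 := fun h => hz0 (by
      have : S.j z = S.j 0 := by rw [h, map_zero]
      exact S.j_inj this)
    have hjzpos : 0 < ‖S.j z‖ := norm_pos_iff.2 hjz
    have h1 : ‖z‖ / ‖S.j z‖ ≤ sSup {r : ℝ | ∃ x : M, x ∈ S.A ∧ x ≠ 0 ∧ r = ‖x‖ / ‖S.j x‖} :=
      le_csSup S.sA_bddAbove ⟨z, hz, hz0, rfl⟩
    have h2 : Real.sqrt S.sA =
        |sSup {r : ℝ | ∃ x : M, x ∈ S.A ∧ x ≠ 0 ∧ r = ‖x‖ / ‖S.j x‖}| := by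
      rw [sA, Real.sqrt_sq_eq_abs]
    have h3 : ‖z‖ / ‖S.j z‖ ≤ Real.sqrt S.sA := by
      rw [h2]; exact le_trans h1 (le_abs_self _)
    calc ‖z‖ = ‖z‖ / ‖S.j z‖ * ‖S.j z‖ := by field_simp
      _ ≤ Real.sqrt S.sA * ‖S.j z‖ := by
          exact mul_le_mul_of_nonneg_right h3 hjzpos.le

lemma aA_nonneg (S : SparseApproxTriple H1 M I) : 0 ≤ S.aA := by
  apply Real.sSup_nonneg
  rintro r ⟨x, xa, u, -, -, -, rfl⟩
  positivity

lemma aA_bddAbove (S : SparseApproxTriple H1 M I) : BddAbove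
    {r : ℝ | ∃ x xa u : M, x ≠ 0 ∧ IsBestApprox S.A x xa ∧
      IsBestApprox S.A (x - xa) u ∧ r = (‖S.j u‖ / ‖xa‖) ^ 2} := by
  refine ⟨1, fun r hr => ?_⟩
  obtain ⟨x, xa, u, hx0, ⟨hxaA, hxamin⟩, ⟨huA, humin⟩, rfl⟩ := hr
  obtain ⟨i, hui⟩ := Set.mem_iUnion.1 huA
  have hsplit : ‖x - xa‖ = ‖u‖ + ‖(x - xa) - u‖ :=
    S.norm_split_M i (x - xa) u hui (fun z hz => humin z (S.mem_A hz))
  have h1 : ‖x - xa‖ ≤ ‖x - u‖ := hxamin u huA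
  have h2 : ‖x - u‖ ≤ ‖(x - xa) - u‖ + ‖xa‖ := by
    calc ‖x - u‖ = ‖((x - xa) - u) + xa‖ := by rw [show x - u = ((x - xa) - u) + xa by abel]
      _ ≤ ‖(x - xa) - u‖ + ‖xa‖ := norm_add_le _ _
  have hu_le : ‖u‖ ≤ ‖xa‖ := by linarith
  have hju : ‖S.j u‖ ≤ ‖xa‖ := le_trans (S.j_norm_le u) hu_le
  rcases eq_or_lt_of_le (norm_nonneg xa) with h0 | h0
  · have hju0 : ‖S.j u‖ = 0 := le_antisymm (h0 ▸ hju) (norm_nonneg _)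
    rw [hju0, ← h0]
    norm_num
  · have hd1 : ‖S.j u‖ / ‖xa‖ ≤ 1 := (div_le_one h0).2 hju
    have hd0 : 0 ≤ ‖S.j u‖ / ‖xa‖ := div_nonneg (norm_nonneg _) (norm_nonneg _)
    nlinarith

end SparseApproxTriple
end Helpers

section RO
open scoped RealInnerProductSpace
open Finset

namespace SparseApproxTriple

variable {H1 : Type*} [NormedAddCommGroup H1] [InnerProductSpace ℝ H1]
  {H2 : Type*} [NormedAddCommGroup H2] [InnerProductSpace ℝ H2]
  {M : Type*} [NormedAddCommGroup M] [NormedSpace ℝ M] {I : Type*}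

lemma mem_sumSet_two (S : SparseApproxTriple H1 M I) {x y : M} (hx : x ∈ S.A) (hy : y ∈ S.A) :
    x + y ∈ S.sumSet 2 := by
  refine ⟨![x, y], ?_, ?_⟩
  · intro n; fin_cases n <;> simpa
  · simp [Fin.sum_univ_two]

lemma ro_raw (S : SparseApproxTriple H1 M I) (T : H1 →L[ℝ] H2) {δ₂ : ℝ}
    (hRIP2 : ∀ z ∈ S.sumSet 2,
      (1 - δ₂) * ‖S.j z‖ ^ 2 ≤ ‖T (S.j z)‖ ^ 2 ∧ ‖T (S.j z)‖ ^ 2 ≤ (1 + δ₂) * ‖S.j z‖ ^ 2)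
    {x y : M} (hx : x ∈ S.A) (hy : y ∈ S.A) :
    |⟪T (S.j x), T (S.j y)⟫ - ⟪S.j x, S.j y⟫| ≤ δ₂ * (‖S.j x‖ ^ 2 + ‖S.j y‖ ^ 2) / 2 := by
  have hp := hRIP2 (x + y) (S.mem_sumSet_two hx hy)
  have hm := hRIP2 (x - y) (by
    have := S.mem_sumSet_two hx (S.neg_mem_A hy)
    simpa [sub_eq_add_neg] using this)
  have ep : S.j (x + y) = S.j x + S.j y := map_add _ _ _
  have em : S.j (x - y) = S.j x - S.j y := map_sub _ _ _
  rw [ep] at hp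
  rw [em] at hm
  have e1 : ‖S.j x + S.j y‖ ^ 2 = ‖S.j x‖ ^ 2 + 2 * ⟪S.j x, S.j y⟫ + ‖S.j y‖ ^ 2 :=
    norm_add_sq_real _ _
  have e2 : ‖S.j x - S.j y‖ ^ 2 = ‖S.j x‖ ^ 2 - 2 * ⟪S.j x, S.j y⟫ + ‖S.j y‖ ^ 2 :=
    norm_sub_sq_real _ _
  have e3 : T (S.j x + S.j y) = T (S.j x) + T (S.j y) := map_add _ _ _
  have e4 : T (S.j x - S.j y) = T (S.j x) - T (S.j y) := map_sub _ _ _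
  rw [e3] at hp
  rw [e4] at hm
  have e5 : ‖T (S.j x) + T (S.j y)‖ ^ 2
      = ‖T (S.j x)‖ ^ 2 + 2 * ⟪T (S.j x), T (S.j y)⟫ + ‖T (S.j y)‖ ^ 2 := norm_add_sq_real _ _
  have e6 : ‖T (S.j x) - T (S.j y)‖ ^ 2
      = ‖T (S.j x)‖ ^ 2 - 2 * ⟪T (S.j x), T (S.j y)⟫ + ‖T (S.j y)‖ ^ 2 := norm_sub_sq_real _ _
  rw [e5, e1] at hp
  rw [e6, e2] at hm
  rw [abs_le]
  constructor <;> nlinarith [hp.1, hp.2, hm.1, hm.2]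

lemma ro_pair (S : SparseApproxTriple H1 M I) (T : H1 →L[ℝ] H2) {δ₂ : ℝ}
    (hRIP2 : ∀ z ∈ S.sumSet 2,
      (1 - δ₂) * ‖S.j z‖ ^ 2 ≤ ‖T (S.j z)‖ ^ 2 ∧ ‖T (S.j z)‖ ^ 2 ≤ (1 + δ₂) * ‖S.j z‖ ^ 2)
    {x y : M} (hx : x ∈ S.A) (hy : y ∈ S.A) :
    |⟪T (S.j x), T (S.j y)⟫ - ⟪S.j x, S.j y⟫| ≤ δ₂ * (‖S.j x‖ * ‖S.j y‖) := by
  rcases eq_or_ne (S.j x) 0 with hx0 | hx0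
  · have : x = 0 := S.j_inj (by rw [hx0, map_zero])
    subst this
    simp
  rcases eq_or_ne (S.j y) 0 with hy0 | hy0
  · have : y = 0 := S.j_inj (by rw [hy0, map_zero])
    subst this
    simp
  have ha : (0:ℝ) < ‖S.j x‖ := norm_pos_iff.2 hx0
  have hb : (0:ℝ) < ‖S.j y‖ := norm_pos_iff.2 hy0
  set t : ℝ := Real.sqrt (‖S.j y‖ / ‖S.j x‖) with htdef
  have htpos : 0 < t := Real.sqrt_pos.2 (div_pos hb ha)
  have ht2 : t ^ 2 = ‖S.j y‖ / ‖S.j x‖ := Real.sq_sqrt (div_pos hb ha).le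
  have hraw := S.ro_raw T hRIP2 (S.smul_mem_A t hx) (S.smul_mem_A t⁻¹ hy)
  have jx' : S.j (t • x) = t • S.j x := map_smul _ _ _
  have jy' : S.j (t⁻¹ • y) = t⁻¹ • S.j y := map_smul _ _ _
  rw [jx', jy'] at hraw
  have Tx' : T (t • S.j x) = t • T (S.j x) := map_smul _ _ _
  have Ty' : T (t⁻¹ • S.j y) = t⁻¹ • T (S.j y) := map_smul _ _ _
  rw [Tx', Ty'] at hraw
  have i1 : ⟪t • T (S.j x), t⁻¹ • T (S.j y)⟫ = ⟪T (S.j x), T (S.j y)⟫ := by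
    rw [real_inner_smul_left, real_inner_smul_right, ← mul_assoc,
      mul_inv_cancel₀ (ne_of_gt htpos), one_mul]
  have i2 : ⟪t • S.j x, t⁻¹ • S.j y⟫ = ⟪S.j x, S.j y⟫ := by
    rw [real_inner_smul_left, real_inner_smul_right, ← mul_assoc,
      mul_inv_cancel₀ (ne_of_gt htpos), one_mul]
  rw [i1, i2] at hraw
  have n1 : ‖t • S.j x‖ ^ 2 = t ^ 2 * ‖S.j x‖ ^ 2 := by
    rw [norm_smul, mul_pow, Real.norm_eq_abs, sq_abs]
  have n2 : ‖t⁻¹ • S.j y‖ ^ 2 = (t ^ 2)⁻¹ * ‖S.j y‖ ^ 2 := by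
    rw [norm_smul, mul_pow, Real.norm_eq_abs, sq_abs, inv_pow]
  rw [n1, n2, ht2] at hraw
  have key : ‖S.j y‖ / ‖S.j x‖ * ‖S.j x‖ ^ 2 + (‖S.j y‖ / ‖S.j x‖)⁻¹ * ‖S.j y‖ ^ 2
      = 2 * (‖S.j x‖ * ‖S.j y‖) := by
    field_simp
    ring
  rw [key] at hraw
  calc |⟪T (S.j x), T (S.j y)⟫ - ⟪S.j x, S.j y⟫|
      ≤ δ₂ * (2 * (‖S.j x‖ * ‖S.j y‖)) / 2 := hraw
    _ = δ₂ * (‖S.j x‖ * ‖S.j y‖) := by ring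

lemma rip_sum (S : SparseApproxTriple H1 M I) (T : H1 →L[ℝ] H2) {δ₂ : ℝ}
    (hRIP2 : ∀ z ∈ S.sumSet 2,
      (1 - δ₂) * ‖S.j z‖ ^ 2 ≤ ‖T (S.j z)‖ ^ 2 ∧ ‖T (S.j z)‖ ^ 2 ≤ (1 + δ₂) * ‖S.j z‖ ^ 2)
    {n : ℕ} (w : Fin n → M) (hw : ∀ i, w i ∈ S.A) :
    |‖T (S.j (∑ i, w i))‖ ^ 2 - ‖S.j (∑ i, w i)‖ ^ 2| ≤ δ₂ * (∑ i, ‖S.j (w i)‖) ^ 2 := by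
  have hjs : S.j (∑ i, w i) = ∑ i, S.j (w i) := map_sum _ _ _
  have hTs : T (∑ i, S.j (w i)) = ∑ i, T (S.j (w i)) := map_sum _ _ _
  rw [hjs, hTs, ← real_inner_self_eq_norm_sq, ← real_inner_self_eq_norm_sq]
  have e1 : ⟪∑ i, T (S.j (w i)), ∑ k, T (S.j (w k))⟫
      = ∑ i, ∑ k, ⟪T (S.j (w i)), T (S.j (w k))⟫ := by
    rw [sum_inner]
    exact Finset.sum_congr rfl fun i _ => inner_sum _ _ _
  have e2 : ⟪∑ i, S.j (w i), ∑ k, S.j (w k)⟫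
      = ∑ i, ∑ k, ⟪S.j (w i), S.j (w k)⟫ := by
    rw [sum_inner]
    exact Finset.sum_congr rfl fun i _ => inner_sum _ _ _
  rw [e1, e2, ← Finset.sum_sub_distrib]
  have e3 : ∀ i ∈ Finset.univ (α := Fin n),
      ∑ k, ⟪T (S.j (w i)), T (S.j (w k))⟫ - ∑ k, ⟪S.j (w i), S.j (w k)⟫
      = ∑ k, (⟪T (S.j (w i)), T (S.j (w k))⟫ - ⟪S.j (w i), S.j (w k)⟫) := by
    intro i _
    rw [← Finset.sum_sub_distrib]
  rw [Finset.sum_congr rfl e3]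
  calc |∑ i, ∑ k, (⟪T (S.j (w i)), T (S.j (w k))⟫ - ⟪S.j (w i), S.j (w k)⟫)|
      ≤ ∑ i, |∑ k, (⟪T (S.j (w i)), T (S.j (w k))⟫ - ⟪S.j (w i), S.j (w k)⟫)| :=
        Finset.abs_sum_le_sum_abs _ _
    _ ≤ ∑ i, ∑ k, |⟪T (S.j (w i)), T (S.j (w k))⟫ - ⟪S.j (w i), S.j (w k)⟫| :=
        Finset.sum_le_sum fun i _ => Finset.abs_sum_le_sum_abs _ _
    _ ≤ ∑ i, ∑ k, δ₂ * (‖S.j (w i)‖ * ‖S.j (w k)‖) :=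
        Finset.sum_le_sum fun i _ => Finset.sum_le_sum fun k _ =>
          S.ro_pair T hRIP2 (hw i) (hw k)
    _ = δ₂ * (∑ i, ‖S.j (w i)‖) ^ 2 := by
        rw [pow_two, Finset.sum_mul_sum, Finset.mul_sum]
        exact Finset.sum_congr rfl fun i _ => by rw [Finset.mul_sum]

end SparseApproxTriple
end RO

section Greedy
open scoped RealInnerProductSpace
open Filter Finset

namespace SparseApproxTriple

variable {H1 : Type*} [NormedAddCommGroup H1] [InnerProductSpace ℝ H1]
  {M : Type*} [NormedAddCommGroup M] [NormedSpace ℝ M] {I : Type*}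

lemma greedy (S : SparseApproxTriple H1 M I) [CompleteSpace M] (h' : M) :
    ∃ u : ℕ → M, (∀ k, u k ∈ S.A) ∧
      (∀ K : ℕ, ∑ k ∈ Finset.range K, ‖u k‖ ≤ ‖h'‖) ∧
      (∀ k : ℕ, ‖S.j (u (k+1))‖ ≤ Real.sqrt S.aA * ‖u k‖) ∧
      ‖S.j (u 0)‖ ≤ ‖S.j h'‖ ∧
      Filter.Tendsto (fun K => h' - ∑ k ∈ Finset.range K, u k) Filter.atTop (nhds 0) := by
  choose ba hbaA hbamin using fun x : M => S.prox S.A S.A_nonempty S.A_closed x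
  let r : ℕ → M := fun k => Nat.rec h' (fun _ rk => rk - ba rk) k
  let u : ℕ → M := fun k => ba (r k)
  have hr0 : r 0 = h' := rfl
  have hrS : ∀ k, r (k+1) = r k - u k := fun k => rfl
  have huA : ∀ k, u k ∈ S.A := fun k => hbaA (r k)
  have humin : ∀ k, ∀ z ∈ S.A, ‖r k - u k‖ ≤ ‖r k - z‖ := fun k => hbamin (r k)
  -- norm splitting along the greedy steps
  have hsplit : ∀ k, ‖r k‖ = ‖u k‖ + ‖r (k+1)‖ := by
    intro k
    obtain ⟨i, hi⟩ := Set.mem_iUnion.1 (huA k)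
    have := S.norm_split_M i (r k) (u k) hi (fun z hz => humin k z (S.mem_A hz))
    rw [hrS k]
    exact this
  have hpart : ∀ K, ∑ k ∈ Finset.range K, ‖u k‖ + ‖r K‖ = ‖h'‖ := by
    intro K
    induction K with
    | zero => simp [hr0]
    | succ n ih => rw [Finset.sum_range_succ]; rw [← ih]; linarith [hsplit n]
  have hsum_le : ∀ K, ∑ k ∈ Finset.range K, ‖u k‖ ≤ ‖h'‖ := by
    intro K
    have := hpart K
    linarith [norm_nonneg (r K)]
  have hS : Summable fun k => ‖u k‖ := summable_of_sum_range_le (fun _ => norm_nonneg _) hsum_le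
  have hSu : Summable u := hS.of_norm
  obtain ⟨L, hL⟩ := hSu
  have hrK : ∀ K, r K = h' - ∑ k ∈ Finset.range K, u k := by
    intro K
    induction K with
    | zero => simp [hr0]
    | succ n ih => rw [hrS n, ih, Finset.sum_range_succ]; abel
  have htend : Tendsto r atTop (nhds (h' - L)) := by
    have h1 : Tendsto (fun K => ∑ k ∈ Finset.range K, u k) atTop (nhds L) := hL.tendsto_sum_nat
    have h2 : Tendsto (fun K => h' - ∑ k ∈ Finset.range K, u k) atTop (nhds (h' - L)) :=
      tendsto_const_nhds.sub h1
    exact h2.congr (fun K => (hrK K).symm)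
  have hu0 : Tendsto (fun k => ‖u k‖) atTop (nhds 0) := hS.tendsto_atTop_zero
  -- the limit residual is orthogonal to A, hence 0
  have hbelow : ∀ w ∈ S.A, ‖h' - L‖ ≤ ‖(h' - L) - w‖ := by
    intro w hw
    have hf : Tendsto (fun K => ‖r K‖ - ‖u K‖) atTop (nhds (‖h' - L‖ - 0)) :=
      (htend.norm).sub hu0
    have hg : Tendsto (fun K => ‖r K - w‖) atTop (nhds ‖(h' - L) - w‖) :=
      (htend.sub tendsto_const_nhds).norm
    have hle : ∀ K, ‖r K‖ - ‖u K‖ ≤ ‖r K - w‖ := by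
      intro K
      have := humin K w hw
      linarith [hsplit K, this, (by rw [hrS K] : r (K+1) = r K - u K) ▸ le_refl ‖r (K+1)‖,
        norm_nonneg (r (K+1))]
    have := le_of_tendsto_of_tendsto' hf hg hle
    simpa using this
  have horth : ∀ (i : I), ∀ w ∈ S.Asub i, ⟪S.j (h' - L), S.j w⟫ = 0 := by
    intro i w hw
    have h0min : ∀ z ∈ S.Asub i, ‖(h' - L) - 0‖ ≤ ‖(h' - L) - z‖ := by
      intro z hz
      rw [sub_zero]
      exact hbelow z (S.mem_A hz)
    have := S.inner_res (i := i) (S.Asub i).zero_mem h0min hw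
    rw [map_zero, sub_zero] at this
    exact this
  have hjzero : S.j (h' - L) = 0 := by
    have hsub : (⋃ k : ℕ, {v : H1 | ∃ f : Fin (k + 1) → M,
        (∀ n, f n ∈ ⋃ i : I, (S.Asub i : Set M)) ∧ v = ∑ n, S.j (f n)})
        ⊆ {v : H1 | ⟪S.j (h' - L), v⟫ = 0} := by
      rintro v hv
      obtain ⟨k, hk⟩ := Set.mem_iUnion.1 hv
      obtain ⟨f, hfA, rfl⟩ := hk
      have : ∀ n, ⟪S.j (h' - L), S.j (f n)⟫ = 0 := by
        intro n
        obtain ⟨i, hi⟩ := Set.mem_iUnion.1 (hfA n)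
        exact horth i (f n) hi
      show ⟪S.j (h' - L), ∑ n, S.j (f n)⟫ = 0
      rw [inner_sum]
      exact Finset.sum_eq_zero fun n _ => this n
    have hclosed : IsClosed {v : H1 | ⟪S.j (h' - L), v⟫ = 0} :=
      isClosed_eq (continuous_const.inner continuous_id) continuous_const
    have hall : ∀ v : H1, ⟪S.j (h' - L), v⟫ = 0 := by
      intro v
      have h1 : closure (⋃ k : ℕ, {v : H1 | ∃ f : Fin (k + 1) → M,
          (∀ n, f n ∈ ⋃ i : I, (S.Asub i : Set M)) ∧ v = ∑ n, S.j (f n)}) = Set.univ :=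
        S.sparse_dense.closure_eq
      have h2 := closure_minimal hsub hclosed
      rw [h1] at h2
      exact h2 (Set.mem_univ v)
    have := hall (S.j (h' - L))
    exact inner_self_eq_zero.mp this
  have hres0 : h' - L = 0 := S.j_inj (by rw [hjzero, map_zero])
  have htend0 : Tendsto (fun K => h' - ∑ k ∈ Finset.range K, u k) atTop (nhds 0) := by
    have := htend.congr (fun K => hrK K)
    rw [hres0] at this
    exact this
  -- the `aA` gain
  have hjuk : ∀ k : ℕ, ‖S.j (u (k+1))‖ ≤ Real.sqrt S.aA * ‖u k‖ := by
    intro k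
    by_cases hk : u k = 0
    · -- then u (k+1) = 0 as well
      have h0A : ∀ z ∈ S.A, ‖r k‖ ≤ ‖r k - z‖ := by
        intro z hz
        have := humin k z hz
        rw [hk, sub_zero] at this
        exact this
      have hr1 : r (k+1) = r k := by rw [hrS k, hk, sub_zero]
      obtain ⟨i, hi⟩ := Set.mem_iUnion.1 (huA (k+1))
      have hsp := S.norm_split_M i (r (k+1)) (u (k+1)) hi
        (fun z hz => humin (k+1) z (S.mem_A hz))
      have h1 : ‖r k‖ ≤ ‖r (k+1) - u (k+1)‖ := by
        rw [hr1]
        exact h0A (u (k+1)) (huA (k+1))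
      rw [hr1] at h1 hsp
      have h2 : ‖u (k+1)‖ ≤ 0 := by linarith
      have h3 : ‖S.j (u (k+1))‖ ≤ 0 := le_trans (S.j_norm_le _) h2
      have h4 : 0 ≤ Real.sqrt S.aA * ‖u k‖ :=
        mul_nonneg (Real.sqrt_nonneg _) (norm_nonneg _)
      linarith
    · have hrk0 : r k ≠ 0 := by
        intro h0
        apply hk
        have := humin k 0 S.zero_mem_A
        rw [h0] at this
        simp at this
        have : ‖u k‖ = 0 := le_antisymm (by simpa using this) (norm_nonneg _)
        exact norm_eq_zero.mp this
      have hmem : (‖S.j (u (k+1))‖ / ‖u k‖) ^ 2 ∈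
          {r : ℝ | ∃ x xa u : M, x ≠ 0 ∧ IsBestApprox S.A x xa ∧
            IsBestApprox S.A (x - xa) u ∧ r = (‖S.j u‖ / ‖xa‖) ^ 2} := by
        refine ⟨r k, u k, u (k+1), hrk0, ⟨huA k, humin k⟩, ⟨huA (k+1), ?_⟩, rfl⟩
        intro z hz
        have := humin (k+1) z hz
        rw [hrS k] at this
        exact this
      have hle : (‖S.j (u (k+1))‖ / ‖u k‖) ^ 2 ≤ S.aA := le_csSup S.aA_bddAbove hmem
      have hd0 : 0 ≤ ‖S.j (u (k+1))‖ / ‖u k‖ := div_nonneg (norm_nonneg _) (norm_nonneg _)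
      have h2 : ‖S.j (u (k+1))‖ / ‖u k‖ ≤ Real.sqrt S.aA :=
        (Real.le_sqrt hd0 S.aA_nonneg).mpr hle
      have hukpos : 0 < ‖u k‖ := norm_pos_iff.2 hk
      calc ‖S.j (u (k+1))‖ = ‖S.j (u (k+1))‖ / ‖u k‖ * ‖u k‖ := by field_simp
        _ ≤ Real.sqrt S.aA * ‖u k‖ := mul_le_mul_of_nonneg_right h2 hukpos.le
  -- ‖j (u 0)‖ ≤ ‖j h'‖
  have hju0 : ‖S.j (u 0)‖ ≤ ‖S.j h'‖ := by
    obtain ⟨i, hi⟩ := Set.mem_iUnion.1 (huA 0)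
    have hsp := S.norm_split_H i (r 0) (u 0) hi (fun z hz => humin 0 z (S.mem_A hz))
    rw [hr0] at hsp
    nlinarith [sq_nonneg ‖S.j h' - S.j (u 0)‖, norm_nonneg (S.j (u 0)), norm_nonneg (S.j h'),
      sq_nonneg (‖S.j (u 0)‖ - ‖S.j h'‖), sq_nonneg (‖S.j (u 0)‖ + ‖S.j h'‖)]
  exact ⟨u, huA, hsum_le, hjuk, hju0, htend0⟩

end SparseApproxTriple
end Greedy

section Arith

private lemma le_of_sq_le_sq' {a b : ℝ} (ha : 0 ≤ a) (hb : 0 ≤ b) (h : a ^ 2 ≤ b ^ 2) :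
    a ≤ b := by nlinarith

private lemma recovery_arith
    (δ₂ α s sd σ σ' t q P G ε B E normh : ℝ)
    (hα0 : 0 ≤ α) (hs0 : 0 ≤ s) (hsd0 : 0 ≤ sd) (hsd1 : sd ≤ 1) (hsd2 : sd ^ 2 = δ₂)
    (hσ'0 : 0 ≤ σ') (hσ'le : σ' ≤ σ) (ht0 : 0 ≤ t) (hq0 : 0 ≤ q) (hP0 : 0 ≤ P)
    (hG0 : 0 ≤ G) (hε0 : 0 ≤ ε)
    (hBdef : B = t + q + α * (s * t + 2 * σ'))
    (hG2 : G ^ 2 ≤ ε ^ 2 + δ₂ * B ^ 2)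
    (hq : q ≤ P) (hpyth : G ^ 2 = t ^ 2 + P ^ 2)
    (hD : 0 < 1 - sd * (Real.sqrt 2 + α * s))
    (hE : E = (1 - sd * (Real.sqrt 2 + α * s))⁻¹)
    (hnormh : normh ≤ 2 * (s * t) + 2 * σ') :
    G ≤ (2 * E * (1 + 2 * (α * s)) + 2) * α * σ + 2 * E * ε ∧
    normh ≤ (2 * E * (1 + 2 * (α * s)) + 2) * σ + 2 * E * s * ε := by
  have hσ0 : 0 ≤ σ := le_trans hσ'0 hσ'le
  have hρ0 : 0 ≤ α * s := mul_nonneg hα0 hs0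
  have hδ₂0 : 0 ≤ δ₂ := hsd2 ▸ sq_nonneg sd
  have hB0 : 0 ≤ B := by
    have h1 : 0 ≤ s * t := mul_nonneg hs0 ht0
    have h2 : 0 ≤ α * (s * t + 2 * σ') := mul_nonneg hα0 (by linarith)
    rw [hBdef]; linarith
  have hEpos : 0 < E := hE ▸ inv_pos.2 hD
  have hsqrt2 : (0:ℝ) < Real.sqrt 2 := Real.sqrt_pos.2 (by norm_num)
  -- G ≤ ε + sd * B
  have h1 : G ≤ ε + sd * B := by
    apply le_of_sq_le_sq' hG0 (by positivity)
    have e : (ε + sd * B) ^ 2 = ε ^ 2 + δ₂ * B ^ 2 + 2 * ε * (sd * B) := by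
      rw [← hsd2]; ring
    have h0 : 0 ≤ 2 * ε * (sd * B) := by positivity
    rw [e]; linarith
  -- t + q ≤ √2 G
  have h3 : t + q ≤ Real.sqrt 2 * G := by
    apply le_of_sq_le_sq' (by linarith) (by positivity)
    rw [mul_pow, Real.sq_sqrt (by norm_num : (0:ℝ) ≤ 2)]
    linarith [sq_nonneg (t - q), mul_self_le_mul_self hq0 hq, hpyth]
  -- t ≤ G
  have h4 : t ≤ G := by
    apply le_of_sq_le_sq' ht0 hG0
    linarith [hpyth, sq_nonneg P]
  -- B ≤ (√2 + αs) G + 2ασ'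
  have h5 : B ≤ (Real.sqrt 2 + α * s) * G + 2 * α * σ' := by
    have hst : α * s * t ≤ α * s * G := mul_le_mul_of_nonneg_left h4 hρ0
    rw [hBdef]; linarith [h3, hst]
  have h6 : G ≤ ε + sd * ((Real.sqrt 2 + α * s) * G + 2 * α * σ') := by
    have := mul_le_mul_of_nonneg_left h5 hsd0
    linarith
  have h7 : (1 - sd * (Real.sqrt 2 + α * s)) * G ≤ ε + 2 * sd * α * σ' := by linarith [h6]
  have hGfin : G ≤ E * ε + 2 * E * sd * α * σ' := by
    have h8 : G = E * ((1 - sd * (Real.sqrt 2 + α * s)) * G) := by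
      rw [hE]; field_simp
    rw [h8]
    calc E * ((1 - sd * (Real.sqrt 2 + α * s)) * G)
        ≤ E * (ε + 2 * sd * α * σ') := mul_le_mul_of_nonneg_left h7 hEpos.le
      _ = E * ε + 2 * E * sd * α * σ' := by ring
  constructor
  · have p1 : 2 * E * sd * α * σ' ≤ 2 * E * α * σ := by
      have q1 : sd * (α * σ') ≤ 1 * (α * σ) :=
        mul_le_mul hsd1 (mul_le_mul_of_nonneg_left hσ'le hα0) (by positivity) zero_le_one
      have r1 := mul_le_mul_of_nonneg_left q1 (by positivity : (0:ℝ) ≤ 2 * E)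
      linarith [r1]
    have p2 : 2 * E * α * σ ≤ (2 * E * (1 + 2 * (α * s)) + 2) * α * σ := by
      have hασ : 0 ≤ α * σ := mul_nonneg hα0 hσ0
      linarith [mul_nonneg (mul_nonneg hEpos.le hρ0) hασ, hασ]
    have p3 : E * ε ≤ 2 * E * ε := by linarith [mul_nonneg hEpos.le hε0]
    linarith
  · have hM3 : s * t ≤ s * G := mul_le_mul_of_nonneg_left h4 hs0
    have hM4 : normh ≤ 2 * s * G + 2 * σ := by linarith [hnormh, hM3, hσ'le]
    have hM5 : 2 * s * G ≤ 2 * s * (E * ε + 2 * E * sd * α * σ') :=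
      mul_le_mul_of_nonneg_left hGfin (by positivity)
    have hM6 : 2 * s * (E * ε + 2 * E * sd * α * σ')
        ≤ 2 * E * s * ε + 4 * E * sd * (α * s) * σ := by
      have q2 : 4 * E * sd * (α * s) * σ' ≤ 4 * E * sd * (α * s) * σ :=
        mul_le_mul_of_nonneg_left hσ'le (by positivity)
      have e : 2 * s * (E * ε + 2 * E * sd * α * σ') = 2 * E * s * ε + 4 * E * sd * (α * s) * σ' := by
        ring
      linarith [q2, e]
    have hM7 : 4 * E * sd * (α * s) * σ + 2 * σ ≤ (2 * E * (1 + 2 * (α * s)) + 2) * σ := by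
      have q1 : 4 * E * sd * (α * s) ≤ 4 * E * (α * s) := by
        linarith [mul_nonneg (mul_nonneg (by positivity : (0:ℝ) ≤ 4 * E) hρ0)
          (sub_nonneg.2 hsd1)]
      linarith [mul_le_mul_of_nonneg_right q1 hσ0, mul_nonneg hEpos.le hσ0]
    linarith

end Arith


section Main
open scoped RealInnerProductSpace
open Filter Finset

set_option maxHeartbeats 1000000 in
/-- Let `T` satisfy the restricted isometry property on `2A` and `4A`, with
`δ₂ := δ_{2A}(T) < (√2 + √(a_A s_A))⁻²`.  Then there are constants `C₁, C₂ > 0`, independent of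
`x⁰` and `ε`, such that the minimizer `x⁰_M` of `‖·‖_M` over `{x̂ : ‖Tx̂ − Tx⁰‖ ≤ ε}` satisfies
`‖x⁰_M − x⁰‖_{H1} ≤ C₁√a_A·σ_{A,M}(x⁰) + C₂ε` and
`‖x⁰_M − x⁰‖_M ≤ C₁σ_{A,M}(x⁰) + C₂√s_A·ε`. -/
theorem sparse_recovery_linear_rip
    {H1 : Type*} [NormedAddCommGroup H1] [InnerProductSpace ℝ H1] [CompleteSpace H1]
    {H2 : Type*} [NormedAddCommGroup H2] [InnerProductSpace ℝ H2] [CompleteSpace H2]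
    {M : Type*} [NormedAddCommGroup M] [NormedSpace ℝ M] [CompleteSpace M]
    {I : Type*} (S : SparseApproxTriple H1 M I)
    (T : H1 →L[ℝ] H2)
    (δ₂ δ₄ : ℝ) (hδ₂0 : 0 ≤ δ₂) (hδ₂1 : δ₂ < 1) (hδ₄0 : 0 ≤ δ₄) (hδ₄1 : δ₄ < 1)
    (hRIP2 : ∀ z ∈ S.sumSet 2,
      (1 - δ₂) * ‖S.j z‖ ^ 2 ≤ ‖T (S.j z)‖ ^ 2 ∧ ‖T (S.j z)‖ ^ 2 ≤ (1 + δ₂) * ‖S.j z‖ ^ 2)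
    (hRIP4 : ∀ z ∈ S.sumSet 4,
      (1 - δ₄) * ‖S.j z‖ ^ 2 ≤ ‖T (S.j z)‖ ^ 2 ∧ ‖T (S.j z)‖ ^ 2 ≤ (1 + δ₄) * ‖S.j z‖ ^ 2)
    (hδ₂small : δ₂ < ((Real.sqrt 2 + Real.sqrt (S.aA * S.sA)) ^ 2)⁻¹) :
    ∃ C₁ C₂ : ℝ, 0 < C₁ ∧ 0 < C₂ ∧
      ∀ (x0 : M) (ε : ℝ), 0 < ε →
        ∀ xm : M, ‖T (S.j xm) - T (S.j x0)‖ ≤ ε →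
          (∀ y : M, ‖T (S.j y) - T (S.j x0)‖ ≤ ε → ‖xm‖ ≤ ‖y‖) →
          ‖S.j xm - S.j x0‖ ≤ C₁ * Real.sqrt S.aA * S.sigma x0 + C₂ * ε ∧
          ‖xm - x0‖ ≤ C₁ * S.sigma x0 + C₂ * Real.sqrt S.sA * ε := by
  classical
  set α : ℝ := Real.sqrt S.aA with hαdef
  set s : ℝ := Real.sqrt S.sA with hsdef
  set sd : ℝ := Real.sqrt δ₂ with hsddef
  have hα0 : 0 ≤ α := Real.sqrt_nonneg _
  have hs0 : 0 ≤ s := Real.sqrt_nonneg _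
  have hsd0 : 0 ≤ sd := Real.sqrt_nonneg _
  have hsd2 : sd ^ 2 = δ₂ := Real.sq_sqrt hδ₂0
  have hsd1 : sd ≤ 1 := Real.sqrt_le_one.mpr hδ₂1.le
  have hρ0 : 0 ≤ α * s := mul_nonneg hα0 hs0
  have hρeq : Real.sqrt (S.aA * S.sA) = α * s := Real.sqrt_mul S.aA_nonneg _
  have hβpos : 0 < Real.sqrt 2 + α * s := by
    have : (0:ℝ) < Real.sqrt 2 := Real.sqrt_pos.2 (by norm_num)
    linarith
  have hD : 0 < 1 - sd * (Real.sqrt 2 + α * s) := by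
    have h1 : δ₂ < ((Real.sqrt 2 + α * s) ^ 2)⁻¹ := by rw [← hρeq]; exact hδ₂small
    have h2 : sd < Real.sqrt (((Real.sqrt 2 + α * s) ^ 2)⁻¹) := Real.sqrt_lt_sqrt hδ₂0 h1
    have h3 : Real.sqrt (((Real.sqrt 2 + α * s) ^ 2)⁻¹) = (Real.sqrt 2 + α * s)⁻¹ := by
      rw [Real.sqrt_inv, Real.sqrt_sq hβpos.le]
    rw [h3] at h2
    have h4 : sd * (Real.sqrt 2 + α * s) < (Real.sqrt 2 + α * s)⁻¹ * (Real.sqrt 2 + α * s) :=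
      mul_lt_mul_of_pos_right h2 hβpos
    rw [inv_mul_cancel₀ (ne_of_gt hβpos)] at h4
    linarith
  set E : ℝ := (1 - sd * (Real.sqrt 2 + α * s))⁻¹ with hEdef
  have hE : 0 < E := inv_pos.2 hD
  refine ⟨2 * E * (1 + 2 * (α * s)) + 2, 2 * E, ?_, by linarith, ?_⟩
  · have := mul_nonneg hE.le hρ0
    linarith
  intro x0 ε hε xm hfeas hmin
  -- best approximation of x0 in A
  obtain ⟨a, haA, hamin⟩ := S.prox S.A S.A_nonempty S.A_closed x0
  obtain ⟨i0, hai0⟩ := Set.mem_iUnion.1 haA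
  -- best approximation of xm in Asub i0
  obtain ⟨b, hbi0, hbmin0⟩ := S.prox (S.Asub i0) ⟨0, (S.Asub i0).zero_mem⟩
    (S.Asub_closed i0) xm
  set h : M := xm - x0 with hhdef
  set hT : M := b - a with hhTdef
  set h' : M := h - hT with hh'def
  have hTmem : hT ∈ S.Asub i0 := sub_mem hbi0 hai0
  set σ : ℝ := S.sigma x0 with hσdef
  set σ' : ℝ := ‖x0 - a‖ with hσ'def
  have hσ'0 : 0 ≤ σ' := norm_nonneg _
  have hσ'le : σ' ≤ σ := by
    rw [hσdef, SparseApproxTriple.sigma]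
    apply le_csInf (S.A_nonempty.image _)
    rintro y ⟨z, hz, rfl⟩
    exact hamin z hz
  -- cone constraint
  have hxm_le : ‖xm‖ ≤ ‖x0‖ := hmin x0 (by simp [sub_self]; exact hε.le)
  have hsplitxm : ‖xm‖ = ‖b‖ + ‖xm - b‖ := S.norm_split_M i0 xm b hbi0 hbmin0
  have hx0le : ‖x0‖ ≤ ‖a‖ + σ' := by
    calc ‖x0‖ = ‖a + (x0 - a)‖ := by rw [show a + (x0 - a) = x0 by abel]
      _ ≤ ‖a‖ + ‖x0 - a‖ := norm_add_le _ _
  have ha_le : ‖a‖ ≤ ‖b‖ + ‖hT‖ := by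
    calc ‖a‖ = ‖b - hT‖ := by rw [show b - hT = a by rw [hhTdef]; abel]
      _ ≤ ‖b‖ + ‖hT‖ := norm_sub_le _ _
  have hh'_le : ‖h'‖ ≤ ‖xm - b‖ + σ' := by
    calc ‖h'‖ = ‖(xm - b) - (x0 - a)‖ := by
          rw [show (xm - b) - (x0 - a) = h' by rw [hh'def, hhdef, hhTdef]; abel]
      _ ≤ ‖xm - b‖ + ‖x0 - a‖ := norm_sub_le _ _
  have hcone : ‖h'‖ ≤ ‖hT‖ + 2 * σ' := by linarith
  -- orthogonality of j hT and j h'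
  have hop1 : ⟪S.j xm - S.j b, S.j hT⟫ = 0 := S.inner_res hbi0 hbmin0 hTmem
  have hop2 : ⟪S.j x0 - S.j a, S.j hT⟫ = 0 :=
    S.inner_res hai0 (fun z hz => hamin z (S.mem_A hz)) hTmem
  have horth : ⟪S.j h', S.j hT⟫ = 0 := by
    have e : S.j h' = (S.j xm - S.j b) - (S.j x0 - S.j a) := by
      rw [hh'def, hhdef, hhTdef]
      simp only [map_sub]
      abel
    rw [e, inner_sub_left, hop1, hop2, sub_zero]
  set t : ℝ := ‖S.j hT‖ with htdef
  set G : ℝ := ‖S.j h‖ with hGdef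
  have ht0 : 0 ≤ t := norm_nonneg _
  have hG0 : 0 ≤ G := norm_nonneg _
  have hpyth : G ^ 2 = t ^ 2 + ‖S.j h'‖ ^ 2 := by
    have e : S.j h = S.j hT + S.j h' := by
      rw [hh'def]
      simp only [map_sub]
      abel
    rw [hGdef, e, norm_add_sq_real, real_inner_comm, horth]
    ring
  -- greedy decomposition of h'
  obtain ⟨u, huA, husum, hjuk, hju0, hutend⟩ := S.greedy h'
  set q : ℝ := ‖S.j (u 0)‖ with hqdef
  have hq0 : 0 ≤ q := norm_nonneg _
  have hh'M : ‖h'‖ ≤ s * t + 2 * σ' := by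
    have := S.norm_le_sqrt_sA (S.mem_A hTmem)
    rw [← hsdef, ← htdef] at this
    linarith
  set B : ℝ := t + q + α * (s * t + 2 * σ') with hBdef
  have hB0 : 0 ≤ B := by
    have h1 : 0 ≤ s * t := mul_nonneg hs0 ht0
    have h2 : 0 ≤ α * (s * t + 2 * σ') := mul_nonneg hα0 (by linarith)
    rw [hBdef]
    linarith
  -- the tail bound: partial sums of ‖j (u k)‖ are bounded
  have htail : ∀ K : ℕ, ∑ k ∈ Finset.range K, ‖S.j (u k)‖ ≤ q + α * ‖h'‖ := by
    intro K
    cases K with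
    | zero =>
      simp only [Finset.range_zero, Finset.sum_empty]
      positivity
    | succ n =>
      rw [Finset.sum_range_succ']
      have h1 : ∑ k ∈ Finset.range n, ‖S.j (u (k + 1))‖
          ≤ ∑ k ∈ Finset.range n, α * ‖u k‖ :=
        Finset.sum_le_sum fun k _ => hjuk k
      have h2 : ∑ k ∈ Finset.range n, α * ‖u k‖ = α * ∑ k ∈ Finset.range n, ‖u k‖ :=
        (Finset.mul_sum _ _ _).symm
      have h3 : α * ∑ k ∈ Finset.range n, ‖u k‖ ≤ α * ‖h'‖ :=
        mul_le_mul_of_nonneg_left (husum n) hα0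
      rw [← hqdef]
      linarith
  -- per-K RIP inequality
  have hKey : ∀ K : ℕ, ‖S.j h - S.j (h' - ∑ k ∈ Finset.range K, u k)‖ ^ 2
      ≤ ‖T (S.j h - S.j (h' - ∑ k ∈ Finset.range K, u k))‖ ^ 2 + δ₂ * B ^ 2 := by
    intro K
    set pK : M := ∑ k ∈ Finset.range K, u k with hpKdef
    set w : Fin (K + 1) → M := Fin.cons hT (fun k : Fin K => u k) with hwdef
    have hwA : ∀ n, w n ∈ S.A := by
      intro n
      refine Fin.cases ?_ ?_ n
      · rw [hwdef]; simpa using S.mem_A hTmem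
      · intro k; rw [hwdef]; simpa using huA k
    have hsw : ∑ n, w n = hT + pK := by
      rw [hwdef, Fin.sum_univ_succ]
      simp only [Fin.cons_zero, Fin.cons_succ]
      rw [Fin.sum_univ_eq_sum_range (fun k => u k) K]
    have hnw : ∑ n, ‖S.j (w n)‖ = t + ∑ k ∈ Finset.range K, ‖S.j (u k)‖ := by
      rw [hwdef, Fin.sum_univ_succ]
      simp only [Fin.cons_zero, Fin.cons_succ]
      rw [Fin.sum_univ_eq_sum_range (fun k => ‖S.j (u k)‖) K, htdef]
    have hrip := S.rip_sum T hRIP2 w hwA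
    rw [hsw, hnw] at hrip
    have hNK_le : t + ∑ k ∈ Finset.range K, ‖S.j (u k)‖ ≤ B := by
      have h1 := htail K
      have h2 : α * ‖h'‖ ≤ α * (s * t + 2 * σ') := mul_le_mul_of_nonneg_left hh'M hα0
      rw [hBdef]
      linarith
    have hNK0 : 0 ≤ t + ∑ k ∈ Finset.range K, ‖S.j (u k)‖ := by
      have : 0 ≤ ∑ k ∈ Finset.range K, ‖S.j (u k)‖ :=
        Finset.sum_nonneg fun k _ => norm_nonneg _
      linarith
    have hsq : (t + ∑ k ∈ Finset.range K, ‖S.j (u k)‖) ^ 2 ≤ B ^ 2 :=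
      pow_le_pow_left₀ hNK0 hNK_le 2
    have hdel : δ₂ * (t + ∑ k ∈ Finset.range K, ‖S.j (u k)‖) ^ 2 ≤ δ₂ * B ^ 2 :=
      mul_le_mul_of_nonneg_left hsq hδ₂0
    have heq : S.j (hT + pK) = S.j h - S.j (h' - pK) := by
      have e : hT + pK = h - (h' - pK) := by rw [hh'def]; abel
      rw [e, map_sub]
    rw [heq] at hrip
    have habs := abs_le.1 hrip
    linarith [habs.1]
  -- pass to the limit
  have hjr : Tendsto (fun K => S.j (h' - ∑ k ∈ Finset.range K, u k)) atTop (nhds 0) := by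
    apply squeeze_zero_norm (fun K => S.j_norm_le _)
    have := hutend.norm
    simpa using this
  have hv : Tendsto (fun K => S.j h - S.j (h' - ∑ k ∈ Finset.range K, u k)) atTop
      (nhds (S.j h)) := by
    have := Filter.Tendsto.sub
      (tendsto_const_nhds : Tendsto (fun _ : ℕ => S.j h) atTop (nhds (S.j h))) hjr
    simpa using this
  have hf1 : Tendsto (fun K => ‖S.j h - S.j (h' - ∑ k ∈ Finset.range K, u k)‖ ^ 2) atTop
      (nhds (G ^ 2)) := (hv.norm).pow 2
  have hf2 : Tendsto (fun K => ‖T (S.j h - S.j (h' - ∑ k ∈ Finset.range K, u k))‖ ^ 2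
      + δ₂ * B ^ 2) atTop (nhds (‖T (S.j h)‖ ^ 2 + δ₂ * B ^ 2)) := by
    have hTv : Tendsto (fun K => T (S.j h - S.j (h' - ∑ k ∈ Finset.range K, u k))) atTop
        (nhds (T (S.j h))) := (T.continuous.tendsto _).comp hv
    exact ((hTv.norm).pow 2).add tendsto_const_nhds
  have hGsq' : G ^ 2 ≤ ‖T (S.j h)‖ ^ 2 + δ₂ * B ^ 2 :=
    le_of_tendsto_of_tendsto' hf1 hf2 hKey
  have hTh : ‖T (S.j h)‖ ≤ ε := by
    rw [hhdef, map_sub, map_sub]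
    exact hfeas
  have hG2 : G ^ 2 ≤ ε ^ 2 + δ₂ * B ^ 2 := by
    have := pow_le_pow_left₀ (norm_nonneg (T (S.j h))) hTh 2
    linarith
  -- bound for the M-norm of h
  have hTle : ‖hT‖ ≤ s * t := by
    have := S.norm_le_sqrt_sA (S.mem_A hTmem)
    rw [← hsdef, ← htdef] at this
    exact this
  have hnormh : ‖h‖ ≤ 2 * (s * t) + 2 * σ' := by
    have hM1 : ‖h‖ ≤ ‖hT‖ + ‖h'‖ := by
      calc ‖h‖ = ‖hT + h'‖ := by rw [show hT + h' = h by rw [hh'def]; abel]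
        _ ≤ ‖hT‖ + ‖h'‖ := norm_add_le _ _
    linarith
  -- final arithmetic
  have final := recovery_arith δ₂ α s sd σ σ' t q ‖S.j h'‖ G ε B E ‖h‖
    hα0 hs0 hsd0 hsd1 hsd2 hσ'0 hσ'le ht0 hq0 (norm_nonneg _) hG0 hε.le
    hBdef hG2 hju0 hpyth hD hEdef hnormh
  constructor
  · have egoal : S.j xm - S.j x0 = S.j h := by rw [hhdef, map_sub]
    rw [egoal, ← hGdef]
    exact final.1
  · exact final.2
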